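/- arXiv:1311.2012 — 2 statements merged into one kernel-verified Lean document; each statement's English description precedes it below -/
import Mathlib

section
/- Let n > t + r be positive integers, let i ∈ {1,…,r}, and let B ∼ Beta(n − t − i + 1, t). Then E[B^{−(n−t−r)}] ≤ n^t. -/
open MeasureTheory ProbabilityTheory

noncomputable section

/-- The density of the Beta distribution with parameters `a, b > 0`. -/
def betaPDFReal (a b : ℝ) (x : ℝ) : ℝ :=
  if 0 < x ∧ x < 1 then
    Real.Gamma (a + b) / (Real.Gamma a * Real.Gamma b) * x ^ (a - 1) * (1 - x) ^ (b - 1)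
  else 0

/-- The Beta distribution with parameters `a, b > 0`, as a measure on `ℝ`. -/
def betaMeasure (a b : ℝ) : Measure ℝ :=
  volume.withDensity fun x => ENNReal.ofReal (_root_.betaPDFReal a b x)

end

/-!
On `(0, 1)` the density of `Beta(a, b)` is `C x^(a-1) (1-x)^(b-1)` with
`C = Γ(a+b) / (Γ(a) Γ(b))`. If `m ≤ a - 1`, then `x^(a-1-m) ≤ 1` there, so
`E[B^(-m)] ≤ C ∫₀¹ (1-x)^(b-1) dx = Γ(a+b) / (Γ(a) Γ(b+1))`.
For `a = n - t - i + 1` and `b = t` this ratio is the binomial coefficient `(n-i).choose t ≤ n^t`.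
-/

open Set

-- `Real.Gamma 0 = 0`, so the normalising constant, and with it the density, vanishes.
lemma betaMeasure_zero_right (a : ℝ) : _root_.betaMeasure a 0 = 0 := by
  simp [_root_.betaMeasure, _root_.betaPDFReal, Real.Gamma_zero]

lemma Gamma_add_div_Gamma_mul_Gamma_nonneg {a b : ℝ} (ha : 0 < a) (hb : 0 < b) :
    0 ≤ Real.Gamma (a + b) / (Real.Gamma a * Real.Gamma b) :=
  div_nonneg (Real.Gamma_pos_of_pos (add_pos ha hb)).le
    (mul_pos (Real.Gamma_pos_of_pos ha) (Real.Gamma_pos_of_pos hb)).le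

lemma betaPDFReal_nonneg {a b : ℝ} (ha : 0 < a) (hb : 0 < b) (x : ℝ) :
    0 ≤ _root_.betaPDFReal a b x := by
  unfold _root_.betaPDFReal
  split_ifs with hx
  · exact mul_nonneg (mul_nonneg (Gamma_add_div_Gamma_mul_Gamma_nonneg ha hb)
      (Real.rpow_nonneg hx.1.le _)) (Real.rpow_nonneg (sub_nonneg.2 hx.2.le) _)
  · exact le_rfl

lemma integral_betaMeasure {a b : ℝ} (ha : 0 < a) (hb : 0 < b) (f : ℝ → ℝ) :
    ∫ x, f x ∂(_root_.betaMeasure a b) = ∫ x, _root_.betaPDFReal a b x * f x := by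
  have hmeas : Measurable (_root_.betaPDFReal a b) :=
    Measurable.ite measurableSet_Ioo (by fun_prop) (by fun_prop)
  rw [_root_.betaMeasure, integral_withDensity_eq_integral_toReal_smul hmeas.ennreal_ofReal
    (ae_of_all _ fun _ => ENNReal.ofReal_lt_top)]
  simp only [ENNReal.toReal_ofReal (betaPDFReal_nonneg ha hb _), smul_eq_mul]

lemma integral_indicator_Ioo_one_sub_rpow {b : ℝ} (hb : 0 < b) :
    ∫ x, (Ioo 0 1).indicator (fun x : ℝ => (1 - x) ^ (b - 1)) x = 1 / b := by
  rw [integral_indicator measurableSet_Ioo, ← integral_Ioc_eq_integral_Ioo,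
    ← intervalIntegral.integral_of_le zero_le_one,
    intervalIntegral.integral_comp_sub_left (fun u => u ^ (b - 1)) 1,
    integral_rpow (Or.inl (by linarith))]
  simp [Real.zero_rpow hb.ne']

lemma integrable_indicator_Ioo_one_sub_rpow {b : ℝ} (hb : 0 < b) :
    Integrable ((Ioo 0 1).indicator fun x : ℝ => (1 - x) ^ (b - 1)) := by
  refine Integrable.of_integral_ne_zero ?_
  rw [integral_indicator_Ioo_one_sub_rpow hb]
  positivity

lemma betaPDFReal_mul_inv_pow_le {a b : ℝ} {m : ℕ} (hb : 0 < b) (hm : (m : ℝ) ≤ a - 1)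
    (x : ℝ) :
    _root_.betaPDFReal a b x * (x ^ m)⁻¹ ≤ Real.Gamma (a + b) / (Real.Gamma a * Real.Gamma b) *
      (Ioo 0 1).indicator (fun x : ℝ => (1 - x) ^ (b - 1)) x := by
  unfold _root_.betaPDFReal
  split_ifs with hx
  · have ha : 0 < a := by linarith [m.cast_nonneg (α := ℝ)]
    have hpow : x ^ (a - 1) * (x ^ m)⁻¹ ≤ 1 := by
      rw [← Real.rpow_natCast, ← Real.rpow_neg hx.1.le, ← Real.rpow_add hx.1]
      exact Real.rpow_le_one hx.1.le hx.2.le (by linarith)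
    rw [indicator_of_mem (show x ∈ Ioo 0 1 from hx)]
    calc _ = Real.Gamma (a + b) / (Real.Gamma a * Real.Gamma b) * (1 - x) ^ (b - 1) *
            (x ^ (a - 1) * (x ^ m)⁻¹) := by ring
      _ ≤ _ := mul_le_of_le_one_right (mul_nonneg (Gamma_add_div_Gamma_mul_Gamma_nonneg ha hb)
          (Real.rpow_nonneg (sub_nonneg.2 hx.2.le) _)) hpow
  · rw [indicator_of_notMem (show x ∉ Ioo 0 1 from hx), zero_mul, mul_zero]

theorem integral_inv_pow_betaMeasure_le_Gamma {a b : ℝ} {m : ℕ} (hb : 0 < b)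
    (hm : (m : ℝ) ≤ a - 1) :
    ∫ x, (x ^ m)⁻¹ ∂(_root_.betaMeasure a b) ≤
      Real.Gamma (a + b) / (Real.Gamma a * Real.Gamma (b + 1)) := by
  have ha : 0 < a := by linarith [m.cast_nonneg (α := ℝ)]
  have hnonneg : ∀ x : ℝ, 0 ≤ _root_.betaPDFReal a b x * (x ^ m)⁻¹ := fun x => by
    by_cases hx : 0 < x
    · exact mul_nonneg (betaPDFReal_nonneg ha hb x) (by positivity)
    · simp [_root_.betaPDFReal, hx]
  calc ∫ x, (x ^ m)⁻¹ ∂(_root_.betaMeasure a b)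
      = ∫ x, _root_.betaPDFReal a b x * (x ^ m)⁻¹ := integral_betaMeasure ha hb _
    _ ≤ ∫ x, Real.Gamma (a + b) / (Real.Gamma a * Real.Gamma b) *
          (Ioo 0 1).indicator (fun x : ℝ => (1 - x) ^ (b - 1)) x :=
        integral_mono_of_nonneg (ae_of_all _ hnonneg)
          ((integrable_indicator_Ioo_one_sub_rpow hb).const_mul _)
          (ae_of_all _ (betaPDFReal_mul_inv_pow_le hb hm))
    _ = _ := by
        rw [integral_const_mul, integral_indicator_Ioo_one_sub_rpow hb,
          Real.Gamma_add_one hb.ne']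
        field_simp

lemma Gamma_div_Gamma_mul_Gamma_eq_choose {N k : ℕ} (hk : k ≤ N) :
    Real.Gamma ((N : ℝ) - k + 1 + k) / (Real.Gamma ((N : ℝ) - k + 1) * Real.Gamma (k + 1)) =
      N.choose k := by
  have hsum : (N : ℝ) - k + 1 + k = N + 1 := by ring
  have hdiff : (N : ℝ) - k + 1 = (N - k : ℕ) + 1 := by push_cast [hk]; ring
  rw [hsum, hdiff, Real.Gamma_nat_eq_factorial, Real.Gamma_nat_eq_factorial,
    Real.Gamma_nat_eq_factorial, Nat.cast_choose ℝ hk, mul_comm]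

theorem integral_inv_pow_betaMeasure_le_general
    {n t r i : ℕ} (hn : t + r < n) (hir : i ≤ r) :
    ∫ x, (x ^ (n - t - r))⁻¹ ∂(_root_.betaMeasure ((n : ℝ) - t - i + 1) t)
      ≤ (n : ℝ) ^ t := by
  rcases Nat.eq_zero_or_pos t with rfl | ht
  · simp [betaMeasure_zero_right]
  have hshape : (n : ℝ) - t - i + 1 = ((n - i : ℕ) : ℝ) - t + 1 := by
    push_cast [show i ≤ n by omega]; ring
  have hexp : ((n - t - r : ℕ) : ℝ) ≤ (n : ℝ) - t - i + 1 - 1 := by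
    have hle : n - t - r + t + i ≤ n := by omega
    have := (Nat.cast_le (α := ℝ)).2 hle
    push_cast at this
    linarith
  calc _ ≤ Real.Gamma ((n : ℝ) - t - i + 1 + t) /
          (Real.Gamma ((n : ℝ) - t - i + 1) * Real.Gamma (t + 1)) :=
        integral_inv_pow_betaMeasure_le_Gamma (Nat.cast_pos.2 ht) hexp
    _ = (n - i).choose t := by
        rw [hshape]; exact Gamma_div_Gamma_mul_Gamma_eq_choose (by omega)
    _ ≤ (n : ℝ) ^ t := by
        exact_mod_cast (Nat.choose_le_pow _ _).trans (Nat.pow_le_pow_left (Nat.sub_le n i) t)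

/-- If `B ∼ Beta(n − t − i + 1, t)` with `1 ≤ i ≤ r` and `n > t + r`, then
`E[B^{−(n−t−r)}] ≤ n^t`. -/
theorem integral_inv_pow_betaMeasure_le
    {n t r i : ℕ} (hn : t + r < n) (hi1 : 1 ≤ i) (hir : i ≤ r) :
    ∫ x, (x ^ (n - t - r))⁻¹ ∂(_root_.betaMeasure ((n : ℝ) - t - i + 1) t)
      ≤ (n : ℝ) ^ t :=
  integral_inv_pow_betaMeasure_le_general hn hir
end

section
/- Let Q, Q′ be t×t positive semidefinite complex matrices and H ∈ ℂ^{t×r}. Then |log det(I_r + Hᴴ Q′ H) − log det(I_r + Hᴴ Q H)| ≤ r^{3/2} · ‖Q′ − Q‖_F · ‖H‖_F². -/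
/-!
Put `A = HᴴQH` and `c = ‖Q′ - Q‖_F ‖H‖_F²`. The Hermitian matrix `Hᴴ(Q′ - Q)H` has Frobenius norm
at most `c`, and every eigenvalue of a Hermitian matrix is bounded by its Frobenius norm, so
`Hᴴ(Q′ - Q)H ≤ c • 1` in the Loewner order. As `A ≥ 0`, this gives
`1 + HᴴQ′H ≤ (1 + c) • (1 + A)`. The determinant is monotone on positive definite matrices
(conjugate by `(1 + A)^{-1/2}` to reduce to `1 ≤ X ⇒ 1 ≤ det X`), hence
`det (1 + HᴴQ′H) ≤ (1 + c)^r det (1 + A)`, and `log (1 + c) ≤ c` bounds the difference of the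
log-determinants by `r c`. Exchanging `Q` and `Q′` gives the absolute value, and `r ≤ r^{3/2}`.
-/

open Matrix
open scoped ComplexOrder

noncomputable section

/-- The Frobenius norm of a complex matrix. -/
def frob {m k : Type*} [Fintype m] [Fintype k] (A : Matrix m k ℂ) : ℝ :=
  Real.sqrt (∑ i, ∑ j, ‖A i j‖ ^ 2)

end

open scoped MatrixOrder

attribute [local instance] Matrix.frobeniusNormedAddCommGroup

namespace Matrix

variable {𝕜 : Type*} [RCLike 𝕜] {m n : Type*} [Fintype m] [Fintype n]

lemma norm_star_dotProduct_mulVec_le (M : Matrix n n 𝕜) (v : EuclideanSpace 𝕜 n) :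
    ‖star ⇑v ⬝ᵥ M *ᵥ ⇑v‖ ≤ ‖M‖ * ‖v‖ ^ 2 := by
  -- `v* M v` is the entry of the `1 × 1` matrix `row v* * M * col v`, whose Frobenius norm is
  -- submultiplicative.
  have hrow : ‖replicateRow Unit (star ⇑v)‖ = ‖v‖ := by
    simp [EuclideanSpace.norm_eq]
  calc ‖star ⇑v ⬝ᵥ M *ᵥ ⇑v‖
      = ‖replicateRow Unit (star ⇑v) * (M * replicateCol Unit ⇑v)‖ := by
        rw [← replicateCol_mulVec, replicateRow_mul_replicateCol]
        simpa [frobenius_norm_def] using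
          (Real.pow_rpow_inv_natCast (norm_nonneg (star ⇑v ⬝ᵥ M *ᵥ ⇑v)) two_ne_zero).symm
    _ ≤ ‖replicateRow Unit (star ⇑v)‖ * (‖M‖ * ‖replicateCol Unit ⇑v‖) :=
        (frobenius_norm_mul _ _).trans (by gcongr; exact frobenius_norm_mul _ _)
    _ = ‖M‖ * ‖v‖ ^ 2 := by
        rw [hrow, frobenius_norm_replicateCol, WithLp.toLp_ofLp]; ring

variable [DecidableEq n]

lemma IsHermitian.le_frobenius_norm_smul_one {M : Matrix n n 𝕜} (hM : M.IsHermitian) :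
    M ≤ (‖M‖ : 𝕜) • 1 := by
  rw [← RCLike.real_smul_eq_coe_smul, ← Algebra.algebraMap_eq_smul_one,
    le_algebraMap_iff_spectrum_le hM.isSelfAdjoint, hM.spectrum_real_eq_range_eigenvalues]
  rintro _ ⟨i, rfl⟩
  calc hM.eigenvalues i ≤ ‖star ⇑(hM.eigenvectorBasis i) ⬝ᵥ M *ᵥ ⇑(hM.eigenvectorBasis i)‖ :=
        hM.eigenvalues_eq i ▸ RCLike.re_le_norm _
    _ ≤ ‖M‖ := by
        simpa [hM.eigenvectorBasis.orthonormal.1 i] using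
          norm_star_dotProduct_mulVec_le M (hM.eigenvectorBasis i)

lemma one_le_det_of_one_le {A : Matrix n n 𝕜} (hA : 1 ≤ A) : 1 ≤ A.det := by
  have hAh : A.IsHermitian := by simpa using hA.isHermitian.add isHermitian_one
  have heig : ∀ i, 1 ≤ hAh.eigenvalues i := by
    have hspec := (algebraMap_le_iff_le_spectrum (R := ℝ) (r := 1) hAh.isSelfAdjoint).mp
      (by simpa using hA)
    rw [hAh.spectrum_real_eq_range_eigenvalues] at hspec
    exact fun i => hspec _ ⟨i, rfl⟩
  rw [hAh.det_eq_prod_eigenvalues, ← RCLike.ofReal_prod, ← RCLike.ofReal_one,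
    RCLike.ofReal_le_ofReal]
  exact Finset.one_le_prod fun i _ => heig i

lemma PosDef.det_le_det_of_le {A B : Matrix n n 𝕜} (hA : A.PosDef) (hAB : A ≤ B) :
    A.det ≤ B.det := by
  set S := CFC.sqrt A
  have hSS : S * S = A := CFC.sqrt_mul_sqrt_self A hA.posSemidef.nonneg
  have hSdet : IsUnit S.det := by
    refine isUnit_iff_ne_zero.mpr fun h => hA.det_pos.ne' ?_
    rw [← hSS, det_mul, h, zero_mul]
  have hSinv_star : star S⁻¹ = S⁻¹ := by
    rw [star_eq_conjTranspose, conjTranspose_nonsing_inv, ← star_eq_conjTranspose,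
      (CFC.sqrt_nonneg A).isSelfAdjoint.star_eq]
  have hconj : star S⁻¹ * A * S⁻¹ = 1 := by
    rw [hSinv_star, ← hSS, Matrix.mul_assoc, Matrix.mul_assoc, mul_nonsing_inv _ hSdet,
      Matrix.mul_one, nonsing_inv_mul _ hSdet]
  have hone : 1 ≤ (star S⁻¹ * B * S⁻¹).det :=
    one_le_det_of_one_le (hconj ▸ star_left_conjugate_le_conjugate hAB S⁻¹)
  have hdet : S.det * S⁻¹.det = 1 := by rw [← det_mul, mul_nonsing_inv _ hSdet, det_one]
  have hB : A.det * (star S⁻¹ * B * S⁻¹).det = B.det := by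
    calc A.det * (star S⁻¹ * B * S⁻¹).det = (S.det * S⁻¹.det) ^ 2 * B.det := by
          rw [hSinv_star, ← hSS]; simp only [det_mul]; ring
      _ = B.det := by rw [hdet, one_pow, one_mul]
  rw [← hB]
  exact le_mul_of_one_le_right hA.det_pos.le hone

lemma det_one_add_conjTranspose_mul_mul_le {Q Q' : Matrix m m 𝕜} (hQ : Q.PosSemidef)
    (hQ' : Q'.PosSemidef) (H : Matrix m n 𝕜) :
    (1 + Hᴴ * Q' * H).det
      ≤ (((1 + ‖Q' - Q‖ * ‖H‖ ^ 2) ^ Fintype.card n : ℝ) : 𝕜) * (1 + Hᴴ * Q * H).det := by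
  set c := ‖Q' - Q‖ * ‖H‖ ^ 2
  set M := Hᴴ * (Q' - Q) * H
  have hMc : ‖M‖ ≤ c := by
    calc ‖M‖ ≤ ‖Hᴴ‖ * ‖Q' - Q‖ * ‖H‖ :=
          (frobenius_norm_mul _ _).trans (by gcongr; exact frobenius_norm_mul _ _)
      _ = c := by rw [frobenius_norm_conjTranspose]; ring
  have hM : M ≤ (c : 𝕜) • 1 := by
    have hMh : M.IsHermitian :=
      isHermitian_conjTranspose_mul_mul H (hQ'.isHermitian.sub hQ.isHermitian)
    refine hMh.le_frobenius_norm_smul_one.trans ?_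
    rw [le_iff, ← sub_smul]
    exact PosSemidef.one.smul (by simpa using hMc)
  have hle : 1 + Hᴴ * Q' * H ≤ ((1 + c : ℝ) : 𝕜) • (1 + Hᴴ * Q * H) := by
    have hsplit : ((1 + c : ℝ) : 𝕜) • (1 + Hᴴ * Q * H) - (1 + Hᴴ * Q' * H)
        = ((c : 𝕜) • 1 - M) + (c : 𝕜) • (Hᴴ * Q * H) := by
      simp only [M, Matrix.mul_sub, Matrix.sub_mul]
      push_cast
      module
    rw [le_iff, hsplit]
    exact hM.add ((hQ.conjTranspose_mul_mul_same H).smul (by positivity))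
  have hpd : (1 + Hᴴ * Q' * H).PosDef :=
    PosDef.one.add_posSemidef (hQ'.conjTranspose_mul_mul_same H)
  rw [RCLike.ofReal_pow]
  exact (hpd.det_le_det_of_le hle).trans_eq (det_smul _ _)

lemma log_re_det_one_add_conjTranspose_mul_mul_le {Q Q' : Matrix m m ℂ} (hQ : Q.PosSemidef)
    (hQ' : Q'.PosSemidef) (H : Matrix m n ℂ) :
    Real.log (1 + Hᴴ * Q' * H).det.re
      ≤ Real.log (1 + Hᴴ * Q * H).det.re + Fintype.card n * (‖Q' - Q‖ * ‖H‖ ^ 2) := by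
  set c := ‖Q' - Q‖ * ‖H‖ ^ 2
  have hpos : 0 < (1 + Hᴴ * Q * H).det.re :=
    (Complex.lt_def.mp (PosDef.one.add_posSemidef (hQ.conjTranspose_mul_mul_same H)).det_pos).1
  have hpos' : 0 < (1 + Hᴴ * Q' * H).det.re :=
    (Complex.lt_def.mp (PosDef.one.add_posSemidef (hQ'.conjTranspose_mul_mul_same H)).det_pos).1
  have hdet : (1 + Hᴴ * Q' * H).det.re ≤ (1 + c) ^ Fintype.card n * (1 + Hᴴ * Q * H).det.re := by
    simpa only [RCLike.ofReal_eq_complex_ofReal, Complex.re_ofReal_mul] using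
      Complex.re_le_re (det_one_add_conjTranspose_mul_mul_le hQ hQ' H)
  have hlog : Real.log (1 + c) ≤ c := by
    simpa using Real.log_le_sub_one_of_pos (x := 1 + c) (by positivity)
  calc Real.log (1 + Hᴴ * Q' * H).det.re
      ≤ Real.log ((1 + c) ^ Fintype.card n * (1 + Hᴴ * Q * H).det.re) :=
        Real.log_le_log hpos' hdet
    _ = Real.log (1 + Hᴴ * Q * H).det.re + Fintype.card n * Real.log (1 + c) := by
        rw [Real.log_mul (by positivity) hpos.ne', Real.log_pow, add_comm]
    _ ≤ Real.log (1 + Hᴴ * Q * H).det.re + Fintype.card n * c := by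
        gcongr

end Matrix

lemma frob_eq_norm {m n : Type*} [Fintype m] [Fintype n] (A : Matrix m n ℂ) : frob A = ‖A‖ := by
  simp [frob, frobenius_norm_def, Real.sqrt_eq_rpow]

/-- Lipschitz-type bound:
`|log det(I + HᴴQ′H) − log det(I + HᴴQH)| ≤ r^{3/2} ‖Q′−Q‖_F ‖H‖_F²`. -/
theorem abs_log_det_sub_log_det_le {t r : ℕ}
    (Q Q' : Matrix (Fin t) (Fin t) ℂ) (hQ : Q.PosSemidef) (hQ' : Q'.PosSemidef)
    (H : Matrix (Fin t) (Fin r) ℂ) :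
    |Real.log (((1 : Matrix (Fin r) (Fin r) ℂ) + Hᴴ * Q' * H).det).re
        - Real.log (((1 : Matrix (Fin r) (Fin r) ℂ) + Hᴴ * Q * H).det).re|
      ≤ (r : ℝ) ^ ((3 : ℝ) / 2) * frob (Q' - Q) * frob H ^ 2 := by
  have h₁ := log_re_det_one_add_conjTranspose_mul_mul_le hQ hQ' H
  have h₂ := log_re_det_one_add_conjTranspose_mul_mul_le hQ' hQ H
  rw [Fintype.card_fin] at h₁ h₂
  rw [norm_sub_rev] at h₂
  have hr : (r : ℝ) ≤ (r : ℝ) ^ ((3 : ℝ) / 2) := by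
    rcases Nat.eq_zero_or_pos r with rfl | hr
    · simp
    · exact Real.self_le_rpow_of_one_le (by exact_mod_cast hr) (by norm_num)
  calc _ ≤ r * (‖Q' - Q‖ * ‖H‖ ^ 2) := abs_sub_le_iff.2 ⟨by linarith, by linarith⟩
    _ ≤ _ := by rw [frob_eq_norm, frob_eq_norm, mul_assoc]; gcongr
end
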